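/- Let H be a (K₃ ∪ P_k)-saturated graph (k ≥ 3). Then every component T of H that is a tree is {K₃, P_k}-saturated, provided H contains a triangle in some other component. -/

import Mathlib

open SimpleGraph

/-- Graph `G` contains a copy of `H`, i.e. a subgraph isomorphic to `H`. -/
def Contains {α β : Type*} (G : SimpleGraph α) (H : SimpleGraph β) : Prop :=
  ∃ f : β ↪ α, ∀ a b, H.Adj a b → G.Adj (f a) (f b)

/-- `G` together with the extra edge `uv`. -/
def addE {α : Type*} (G : SimpleGraph α) (u v : α) : SimpleGraph α :=
  G ⊔ SimpleGraph.fromEdgeSet {s(u, v)}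

/-- `G` is `H`-saturated: `G` is `H`-free and adding any non-edge creates a copy of `H`. -/
def Saturated {α β : Type*} (G : SimpleGraph α) (H : SimpleGraph β) : Prop :=
  ¬ Contains G H ∧ ∀ u v : α, u ≠ v → ¬ G.Adj u v → Contains (addE G u v) H

/-- The join `K₁ ∨ F`: a new vertex (`none`) adjacent to every vertex of `F`. -/
def joinK1 {β : Type*} (F : SimpleGraph β) : SimpleGraph (Option β) where
  Adj x y :=
    match x, y with
    | some a, some b => F.Adj a b
    | some _, none => True
    | none, some _ => True
    | none, none => False
  symm := by
    constructor
    rintro (_ | a) (_ | b) h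
    · exact h.elim
    · trivial
    · trivial
    · exact h.symm
  loopless := by
    constructor
    rintro (_ | a) h
    · exact h.elim
    · exact F.loopless.irrefl a h

/-- The saturation number `sat(n, H)`: minimum number of edges of an `H`-saturated
graph on `n` vertices. -/
noncomputable def satNum {β : Type*} (n : ℕ) (H : SimpleGraph β) : ℕ :=
  sInf {e | ∃ G : SimpleGraph (Fin n), Saturated G H ∧ G.edgeSet.ncard = e}

/-- The triangle. -/
def K3 : SimpleGraph (Fin 3) := ⊤

/-- `G` is `{K₃, Pₖ}`-saturated. -/
def SatKP {V : Type*} (G : SimpleGraph V) (k : ℕ) : Prop :=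
  ¬ Contains G K3 ∧ ¬ Contains G (SimpleGraph.pathGraph k) ∧
    ∀ u v : V, u ≠ v → ¬ G.Adj u v →
      Contains (addE G u v) K3 ∨ Contains (addE G u v) (SimpleGraph.pathGraph k)

/-- The saturation number `sat(n, {K₃, Pₖ})`. -/
noncomputable def satKPNum (n k : ℕ) : ℕ :=
  sInf {e | ∃ G : SimpleGraph (Fin n), SatKP G k ∧ G.edgeSet.ncard = e}

/-- Disjoint union of two graphs. -/
def sumGraph {α β : Type*} (A : SimpleGraph α) (B : SimpleGraph β) :
    SimpleGraph (α ⊕ β) where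
  Adj x y :=
    match x, y with
    | .inl a, .inl b => A.Adj a b
    | .inr a, .inr b => B.Adj a b
    | _, _ => False
  symm := by
    constructor
    rintro (a | a) (b | b) h
    · exact h.symm
    · exact h.elim
    · exact h.elim
    · exact h.symm
  loopless := by
    constructor
    rintro (a | a) h
    · exact A.loopless.irrefl a h
    · exact B.loopless.irrefl a h

/-- Disjoint union of a family of graphs. -/
def sigmaGraph {ι : Type*} {V : ι → Type*} (G : ∀ i, SimpleGraph (V i)) :
    SimpleGraph (Σ i, V i) where
  Adj x y := ∃ (i : ι) (a b : V i), x = ⟨i, a⟩ ∧ y = ⟨i, b⟩ ∧ (G i).Adj a b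
  symm := by
    constructor
    rintro x y ⟨i, a, b, rfl, rfl, h⟩
    exact ⟨i, b, a, rfl, rfl, h.symm⟩
  loopless := by
    constructor
    rintro ⟨j, c⟩ ⟨i, a, b, h1, h2, h⟩
    rw [h1] at h2
    obtain ⟨rfl⟩ := h2
    exact (G i).loopless.irrefl a h

/-!
A tree component `T = H[C]` is triangle-free, and it is `Pₖ`-free because a `Pₖ` in `T`
together with the triangle `abc` outside `C` would be a copy of `K₃ ∪ Pₖ` in `H`. For a
non-edge `uv` of `T`, the copy of `K₃ ∪ Pₖ` in `H + uv` must use the new edge; the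
(connected) component of `K₃ ∪ Pₖ` carrying that edge then stays inside the component of
`u` in `H + uv`, which is `C` because `u` and `v` are already joined in `H`. So `T + uv`
contains a triangle or a `Pₖ`.
-/

section

variable {V α β : Type*}

lemma addE_adj {G : SimpleGraph V} {u v x y : V} :
    (addE G u v).Adj x y ↔ G.Adj x y ∨ (s(x, y) = s(u, v) ∧ x ≠ y) := by
  simp [addE, fromEdgeSet_adj]

lemma induce_addE (G : SimpleGraph V) (s : Set V) (u v : s) :
    (addE G u v).induce s = addE (G.induce s) u v := by
  ext x y
  simp only [comap_adj, Function.Embedding.subtype_apply, addE_adj, Sym2.eq_iff,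
    Subtype.ext_iff, ne_eq]

lemma contains_iff_isContained {G : SimpleGraph V} {F : SimpleGraph β} :
    Contains G F ↔ F ⊑ G :=
  isContained_iff_exists_le_comap.symm

lemma SimpleGraph.IsAcyclic.not_contains_K3 {G : SimpleGraph V} (hG : G.IsAcyclic) :
    ¬ Contains G K3 := by
  rw [contains_iff_isContained, K3, ← not_cliqueFree_iff_top_isContained, not_not]
  intro s hs
  obtain ⟨a, w, hw, -⟩ := is3Clique_iff_exists_cycle_length_three.mp ⟨s, hs⟩
  exact hG w hw

lemma exists_K3_embedding {G : SimpleGraph V} {a b c : V}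
    (hab : G.Adj a b) (hbc : G.Adj b c) (hac : G.Adj a c) :
    ∃ f : Fin 3 ↪ V, f 0 = a ∧ ∀ i j, K3.Adj i j → G.Adj (f i) (f j) := by
  refine ⟨⟨![a, b, c], fun i j h => ?_⟩, rfl, fun i j h => ?_⟩
  · fin_cases i <;> fin_cases j <;> simp_all [hab.ne, hbc.ne, hac.ne, hab.ne', hbc.ne', hac.ne']
  · change G.Adj (![a, b, c] i) (![a, b, c] j)
    fin_cases i <;> fin_cases j <;> first
      | exact absurd rfl h
      | simp [hab, hbc, hac, hab.symm, hbc.symm, hac.symm]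

lemma contains_induce_of_preconnected {F : SimpleGraph β} (hF : F.Preconnected)
    {G : SimpleGraph V} {s : Set V} (hs : ∀ x y, G.Adj x y → x ∈ s → y ∈ s)
    (f : β ↪ V) (hf : ∀ a b, F.Adj a b → G.Adj (f a) (f b)) (b₀ : β) (hb₀ : f b₀ ∈ s) :
    Contains (G.induce s) F := by
  have hclosed : ∀ y, Relation.ReflTransGen G.Adj (f b₀) y → y ∈ s := fun y h => by
    induction h with
    | refl => exact hb₀
    | tail _ hxy ih => exact hs _ _ hxy ih
  have hmem : ∀ b, f b ∈ s := fun b =>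
    hclosed _ ((reachable_iff_reflTransGen _ _).mp ((hF b₀ b).map ⟨f, hf _ _⟩))
  exact ⟨⟨fun b => ⟨f b, hmem b⟩, fun a b h => f.injective (congrArg Subtype.val h)⟩, hf⟩

lemma contains_of_addE {G : SimpleGraph V} {F : SimpleGraph β} {u v : V} (f : β ↪ V)
    (hf : ∀ a b, F.Adj a b → (addE G u v).Adj (f a) (f b))
    (hnew : ∀ a b, F.Adj a b → s(f a, f b) ≠ s(u, v)) : Contains G F :=
  ⟨f, fun a b h => (addE_adj.mp (hf a b h)).resolve_right fun h' => hnew a b h h'.1⟩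

lemma contains_sumGraph {A : SimpleGraph α} {B : SimpleGraph β} {G : SimpleGraph V}
    (s : Set V) (hA : Contains (G.induce sᶜ) A) (hB : Contains (G.induce s) B) :
    Contains G (sumGraph A B) := by
  obtain ⟨f, hf⟩ := hA
  obtain ⟨g, hg⟩ := hB
  refine ⟨⟨Sum.elim (fun a => (f a : V)) (fun b => (g b : V)),
    (Subtype.val_injective.comp f.injective).sumElim (Subtype.val_injective.comp g.injective)
      fun a b h => (f a).2 ((show (f a : V) = g b from h) ▸ (g b).2)⟩, ?_⟩
  rintro (a | a) (b | b) h
  exacts [hf a b h, h.elim, h.elim, hg a b h]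

end

theorem statement_16_general {V : Type*} (k : ℕ)
    (H : SimpleGraph V) (hsat : Saturated H (sumGraph K3 (SimpleGraph.pathGraph k)))
    (C : H.ConnectedComponent) (htree : (SimpleGraph.induce C.supp H).IsTree)
    (a b c : V) (hab : H.Adj a b) (hbc : H.Adj b c) (hac : H.Adj a c)
    (hcomp : H.connectedComponentMk a ≠ C) :
    SatKP (SimpleGraph.induce C.supp H) k := by
  have hsupp : ∀ x y, H.Adj x y → (x ∈ C.supp ↔ y ∈ C.supp) := fun x y h => by
    simp only [ConnectedComponent.mem_supp_iff,
      ConnectedComponent.connectedComponentMk_eq_of_adj h]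
  refine ⟨htree.isAcyclic.not_contains_K3, fun hP => hsat.1 ?_, fun u v huv hnadj => ?_⟩
  · obtain ⟨f, hf0, hf⟩ := exists_K3_embedding hab hbc hac
    exact contains_sumGraph C.supp (contains_induce_of_preconnected preconnected_top
      (fun x y h => mt (hsupp x y h).mpr) f hf 0 (hf0 ▸ hcomp)) hP
  obtain ⟨g, hg⟩ := hsat.2 u v (Subtype.val_injective.ne huv) hnadj
  obtain ⟨x, y, hxy, hnew⟩ : ∃ x y, (sumGraph K3 (pathGraph k)).Adj x y ∧
      s(g x, g y) = s((u : V), (v : V)) := by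
    by_contra! h
    exact hsat.1 (contains_of_addE g hg h)
  have hclosed : ∀ x y, (addE H u v).Adj x y → x ∈ C.supp → y ∈ C.supp := fun x y h hx => by
    rcases addE_adj.mp h with h | ⟨h, -⟩
    · exact (hsupp x y h).mp hx
    · rcases Sym2.mem_iff.mp (h ▸ Sym2.mem_mk_right x y) with rfl | rfl
      exacts [u.2, v.2]
  have hgx : g x ∈ C.supp := by
    rcases Sym2.mem_iff.mp (hnew ▸ Sym2.mem_mk_left (g x) (g y)) with h | h
    exacts [h ▸ u.2, h ▸ v.2]
  rw [← induce_addE]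
  rcases x with i | p <;> rcases y with j | q
  · exact .inl <| contains_induce_of_preconnected preconnected_top hclosed
      (Function.Embedding.inl.trans g) (fun i j h => hg _ _ h) i hgx
  · exact hxy.elim
  · exact hxy.elim
  · exact .inr <| contains_induce_of_preconnected (pathGraph_preconnected k) hclosed
      (Function.Embedding.inr.trans g) (fun i j h => hg _ _ h) p hgx

theorem statement_16 {V : Type*} [Fintype V] (k : ℕ) (hk : 3 ≤ k)
    (H : SimpleGraph V) (hsat : Saturated H (sumGraph K3 (SimpleGraph.pathGraph k)))
    (C : H.ConnectedComponent) (htree : (SimpleGraph.induce C.supp H).IsTree)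
    (a b c : V) (hab : H.Adj a b) (hbc : H.Adj b c) (hac : H.Adj a c)
    (hcomp : H.connectedComponentMk a ≠ C) :
    SatKP (SimpleGraph.induce C.supp H) k :=
  statement_16_general k H hsat C htree a b c hab hbc hac hcomp
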